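/- arXiv:2008.10881 — 5 statements merged into one kernel-verified Lean document; each statement's English description precedes it below -/
import Mathlib

section
/- Let r1, s1, r2, s2 be real numbers with rᵢ² + sᵢ² ≠ 1 for i = 1, 2, define αᵢ, βᵢ, γᵢ and the matrix J_s as in the J_s-family, and let A be the 4×4 antisymmetric matrix with rows (0, 1, 0, 0), (-1, 0, 0, 0), (0, 0, 0, 1), (0, 0, -1, 0) (the matrix of the symplectic form ω = e¹∧e² + e³∧e⁴). Then J_sᵀ · A · J_s = A, i.e. the almost complex structure J_s is compatible with ω in the sense that ω(J_s·, J_s·) = ω(·, ·). -/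
open Matrix

theorem stmt_2 (r1 s1 r2 s2 α1 β1 γ1 α2 β2 γ2 : ℝ)
    (h1 : r1 ^ 2 + s1 ^ 2 ≠ 1) (h2 : r2 ^ 2 + s2 ^ 2 ≠ 1)
    (hα1 : α1 = -2 * s1 / (r1 ^ 2 + s1 ^ 2 - 1))
    (hβ1 : β1 = (r1 ^ 2 + 2 * r1 + s1 ^ 2 + 1) / (r1 ^ 2 + s1 ^ 2 - 1))
    (hγ1 : γ1 = -(r1 ^ 2 - 2 * r1 + s1 ^ 2 + 1) / (r1 ^ 2 + s1 ^ 2 - 1))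
    (hα2 : α2 = -2 * s2 / (r2 ^ 2 + s2 ^ 2 - 1))
    (hβ2 : β2 = (r2 ^ 2 + 2 * r2 + s2 ^ 2 + 1) / (r2 ^ 2 + s2 ^ 2 - 1))
    (hγ2 : γ2 = -(r2 ^ 2 - 2 * r2 + s2 ^ 2 + 1) / (r2 ^ 2 + s2 ^ 2 - 1))
    (J A : Matrix (Fin 4) (Fin 4) ℝ)
    (hJ : J = !![α1, β1, 0, 0; γ1, -α1, 0, 0; 0, 0, α2, β2; 0, 0, γ2, -α2])
    (hA : A = !![0, 1, 0, 0; -1, 0, 0, 0; 0, 0, 0, 1; 0, 0, -1, 0]) :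
    Jᵀ * A * J = A := by
  have d1 : r1 ^ 2 + s1 ^ 2 - 1 ≠ 0 := sub_ne_zero.mpr h1
  have d2 : r2 ^ 2 + s2 ^ 2 - 1 ≠ 0 := sub_ne_zero.mpr h2
  subst hα1 hβ1 hγ1 hα2 hβ2 hγ2 hJ hA
  ext i j
  fin_cases i <;> fin_cases j <;>
    simp [Matrix.mul_apply, Fin.sum_univ_succ, Matrix.vecHead, Matrix.vecTail] <;> (try field_simp) <;> ring
end

section
/- Let r1, s1, r2, s2 be real numbers with rᵢ² + sᵢ² < 1 for i = 1, 2, define αᵢ, βᵢ, γᵢ as in the J_s-family, and let A = [[0,1,0,0],[-1,0,0,0],[0,0,0,1],[0,0,-1,0]]. Then the matrix G_s = A · J_s, which equals the block-diagonal matrix with blocks [[γ₁, -α₁], [-α₁, -β₁]] and [[γ₂, -α₂], [-α₂, -β₂]], is symmetric and positive definite; i.e. the bilinear form g_s(·, ·) = ω(·, J_s·) is a Riemannian metric whenever rᵢ² + sᵢ² < 1. -/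
/-!
Each diagonal block `[[γ, -α], [-α, -β]]` of `G_s` has determinant `γ (-β) - α² = 1` for every
parameter, and `γ > 0` when `r² + s² < 1`, its numerator `(r - 1)² + s²` being positive and its
denominator negative. Completing the square then shows that both blocks, hence `G_s`, are positive
definite.
-/

open Matrix

lemma gamma_pos {r s γ : ℝ} (h : r ^ 2 + s ^ 2 < 1)
    (hγ : γ = -(r ^ 2 - 2 * r + s ^ 2 + 1) / (r ^ 2 + s ^ 2 - 1)) : 0 < γ := by
  rw [hγ]
  exact div_pos_of_neg_of_neg (by nlinarith [sq_nonneg (r - 1)]) (by linarith)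

lemma gamma_mul_neg_beta_sub_neg_alpha_sq {r s α β γ : ℝ} (h : r ^ 2 + s ^ 2 ≠ 1)
    (hα : α = -2 * s / (r ^ 2 + s ^ 2 - 1))
    (hβ : β = (r ^ 2 + 2 * r + s ^ 2 + 1) / (r ^ 2 + s ^ 2 - 1))
    (hγ : γ = -(r ^ 2 - 2 * r + s ^ 2 + 1) / (r ^ 2 + s ^ 2 - 1)) :
    γ * -β - (-α) ^ 2 = 1 := by
  have hd : r ^ 2 + s ^ 2 - 1 ≠ 0 := sub_ne_zero.mpr h
  subst hα hβ hγ
  field_simp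
  ring

lemma mul_binaryQuadForm_eq {p q t a b : ℝ} :
    p * (p * a ^ 2 + 2 * q * a * b + t * b ^ 2) = (p * a + q * b) ^ 2 + (p * t - q ^ 2) * b ^ 2 := by
  ring

lemma binaryQuadForm_nonneg {p q t : ℝ} (hp : 0 < p) (hdet : 0 < p * t - q ^ 2) (a b : ℝ) :
    0 ≤ p * a ^ 2 + 2 * q * a * b + t * b ^ 2 := by
  refine nonneg_of_mul_nonneg_right ?_ hp
  rw [mul_binaryQuadForm_eq]
  positivity

lemma binaryQuadForm_pos {p q t a b : ℝ} (hp : 0 < p) (hdet : 0 < p * t - q ^ 2)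
    (hab : a ≠ 0 ∨ b ≠ 0) : 0 < p * a ^ 2 + 2 * q * a * b + t * b ^ 2 := by
  refine pos_of_mul_pos_right ?_ hp.le
  rw [mul_binaryQuadForm_eq]
  rcases eq_or_ne b 0 with rfl | hb
  · have ha : a ≠ 0 := by simpa using hab
    simp only [mul_zero, add_zero, ne_eq, OfNat.ofNat_ne_zero, not_false_eq_true, zero_pow]
    positivity
  · positivity

lemma posDef_of_blocks_fin_two_fin_two {p₁ q₁ t₁ p₂ q₂ t₂ : ℝ}
    (hp₁ : 0 < p₁) (hdet₁ : 0 < p₁ * t₁ - q₁ ^ 2) (hp₂ : 0 < p₂) (hdet₂ : 0 < p₂ * t₂ - q₂ ^ 2) :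
    (!![p₁, q₁, 0, 0; q₁, t₁, 0, 0; 0, 0, p₂, q₂; 0, 0, q₂, t₂]).PosDef := by
  rw [posDef_iff_dotProduct_mulVec]
  refine ⟨?_, fun x hx => ?_⟩
  · ext i j
    fin_cases i <;> fin_cases j <;> rfl
  have hform : star x ⬝ᵥ (!![p₁, q₁, 0, 0; q₁, t₁, 0, 0; 0, 0, p₂, q₂; 0, 0, q₂, t₂] *ᵥ x) =
      (p₁ * x 0 ^ 2 + 2 * q₁ * x 0 * x 1 + t₁ * x 1 ^ 2) +
        (p₂ * x 2 ^ 2 + 2 * q₂ * x 2 * x 3 + t₂ * x 3 ^ 2) := by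
    simp [dotProduct, mulVec, Fin.sum_univ_four]
    ring
  have hx' : (x 0 ≠ 0 ∨ x 1 ≠ 0) ∨ (x 2 ≠ 0 ∨ x 3 ≠ 0) := by
    contrapose! hx
    ext i
    fin_cases i <;> simp [hx]
  rw [hform]
  rcases hx' with h | h
  · exact add_pos_of_pos_of_nonneg (binaryQuadForm_pos hp₁ hdet₁ h)
      (binaryQuadForm_nonneg hp₂ hdet₂ _ _)
  · exact add_pos_of_nonneg_of_pos (binaryQuadForm_nonneg hp₁ hdet₁ _ _)
      (binaryQuadForm_pos hp₂ hdet₂ h)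

theorem stmt_3 (r1 s1 r2 s2 α1 β1 γ1 α2 β2 γ2 : ℝ)
    (h1 : r1 ^ 2 + s1 ^ 2 < 1) (h2 : r2 ^ 2 + s2 ^ 2 < 1)
    (hα1 : α1 = -2 * s1 / (r1 ^ 2 + s1 ^ 2 - 1))
    (hβ1 : β1 = (r1 ^ 2 + 2 * r1 + s1 ^ 2 + 1) / (r1 ^ 2 + s1 ^ 2 - 1))
    (hγ1 : γ1 = -(r1 ^ 2 - 2 * r1 + s1 ^ 2 + 1) / (r1 ^ 2 + s1 ^ 2 - 1))
    (hα2 : α2 = -2 * s2 / (r2 ^ 2 + s2 ^ 2 - 1))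
    (hβ2 : β2 = (r2 ^ 2 + 2 * r2 + s2 ^ 2 + 1) / (r2 ^ 2 + s2 ^ 2 - 1))
    (hγ2 : γ2 = -(r2 ^ 2 - 2 * r2 + s2 ^ 2 + 1) / (r2 ^ 2 + s2 ^ 2 - 1))
    (J A : Matrix (Fin 4) (Fin 4) ℝ)
    (hJ : J = !![α1, β1, 0, 0; γ1, -α1, 0, 0; 0, 0, α2, β2; 0, 0, γ2, -α2])
    (hA : A = !![0, 1, 0, 0; -1, 0, 0, 0; 0, 0, 0, 1; 0, 0, -1, 0]) :
    A * J = !![γ1, -α1, 0, 0; -α1, -β1, 0, 0; 0, 0, γ2, -α2; 0, 0, -α2, -β2] ∧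
      (A * J)ᵀ = A * J ∧ (A * J).PosDef := by
  have hprod : A * J = !![γ1, -α1, 0, 0; -α1, -β1, 0, 0; 0, 0, γ2, -α2; 0, 0, -α2, -β2] := by
    subst hJ hA
    ext i j
    fin_cases i <;> fin_cases j <;> simp [mul_apply, Fin.sum_univ_four]
  have hdet₁ := gamma_mul_neg_beta_sub_neg_alpha_sq h1.ne hα1 hβ1 hγ1
  have hdet₂ := gamma_mul_neg_beta_sub_neg_alpha_sq h2.ne hα2 hβ2 hγ2
  have hpos : (A * J).PosDef := hprod ▸ posDef_of_blocks_fin_two_fin_two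
    (gamma_pos h1 hγ1) (hdet₁ ▸ one_pos) (gamma_pos h2 hγ2) (hdet₂ ▸ one_pos)
  refine ⟨hprod, ?_, hpos⟩
  rw [← conjTranspose_eq_transpose_of_trivial]
  exact hpos.isHermitian
end

section
/- Fix k ∈ ℝ, k ≠ 0, and equip ℝ⁴ (with standard basis e₁, e₂, e₃, e₄) with the antisymmetric bilinear bracket determined by [e₁, e₃] = -k e₁, [e₂, e₃] = k e₂, and all other brackets of basis vectors equal to zero (this is the Lie algebra of the group G(k)). Let r1, s1, r2, s2 be real numbers with rᵢ² + sᵢ² ≠ 1, define αᵢ, βᵢ, γᵢ and J_s as in the J_s-family, and define the Nijenhuis bilinear map N(X, Y) = [J_s X, J_s Y] - [X, Y] - J_s[J_s X, Y] - J_s[X, J_s Y]. Then N(e₁, e₃) = 2k(1 + α₁²) e₁ + 2kγ₁(α₁ + α₂) e₂, which is nonzero; in particular the almost complex structure J_s is never integrable. -/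
open Matrix

theorem stmt_4 (k : ℝ) (hk : k ≠ 0) (r1 s1 r2 s2 α1 β1 γ1 α2 β2 γ2 : ℝ)
    (h1 : r1 ^ 2 + s1 ^ 2 ≠ 1) (h2 : r2 ^ 2 + s2 ^ 2 ≠ 1)
    (hα1 : α1 = -2 * s1 / (r1 ^ 2 + s1 ^ 2 - 1))
    (hβ1 : β1 = (r1 ^ 2 + 2 * r1 + s1 ^ 2 + 1) / (r1 ^ 2 + s1 ^ 2 - 1))
    (hγ1 : γ1 = -(r1 ^ 2 - 2 * r1 + s1 ^ 2 + 1) / (r1 ^ 2 + s1 ^ 2 - 1))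
    (hα2 : α2 = -2 * s2 / (r2 ^ 2 + s2 ^ 2 - 1))
    (hβ2 : β2 = (r2 ^ 2 + 2 * r2 + s2 ^ 2 + 1) / (r2 ^ 2 + s2 ^ 2 - 1))
    (hγ2 : γ2 = -(r2 ^ 2 - 2 * r2 + s2 ^ 2 + 1) / (r2 ^ 2 + s2 ^ 2 - 1))
    (J : Matrix (Fin 4) (Fin 4) ℝ)
    (hJ : J = !![α1, β1, 0, 0; γ1, -α1, 0, 0; 0, 0, α2, β2; 0, 0, γ2, -α2])
    -- the Lie bracket of 𝔯𝔯_{3,-1} ⊕ ℝ : the bilinear antisymmetric bracket with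
    -- [e₁,e₃] = -k e₁, [e₂,e₃] = k e₂ and all other basis brackets zero
    (bracket : (Fin 4 → ℝ) → (Fin 4 → ℝ) → (Fin 4 → ℝ))
    (hbracket : ∀ X Y : Fin 4 → ℝ,
      bracket X Y = ![-k * (X 0 * Y 2 - X 2 * Y 0), k * (X 1 * Y 2 - X 2 * Y 1), 0, 0])
    -- the Nijenhuis tensor of J
    (N : (Fin 4 → ℝ) → (Fin 4 → ℝ) → (Fin 4 → ℝ))
    (hN : ∀ X Y : Fin 4 → ℝ,
      N X Y = bracket (J.mulVec X) (J.mulVec Y) - bracket X Y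
        - J.mulVec (bracket (J.mulVec X) Y) - J.mulVec (bracket X (J.mulVec Y))) :
    N ![1, 0, 0, 0] ![0, 0, 1, 0]
        = (2 * k * (1 + α1 ^ 2)) • ![(1 : ℝ), 0, 0, 0]
          + (2 * k * γ1 * (α1 + α2)) • ![(0 : ℝ), 1, 0, 0] ∧
      N ![1, 0, 0, 0] ![0, 0, 1, 0] ≠ 0 := by
  have hd1 : r1 ^ 2 + s1 ^ 2 - 1 ≠ 0 := sub_ne_zero.mpr h1
  have key : β1 * γ1 = -1 - α1 ^ 2 := by
    subst hα1 hβ1 hγ1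
    field_simp
    ring
  have hEq : N ![1, 0, 0, 0] ![0, 0, 1, 0]
      = (2 * k * (1 + α1 ^ 2)) • ![(1 : ℝ), 0, 0, 0]
        + (2 * k * γ1 * (α1 + α2)) • ![(0 : ℝ), 1, 0, 0] := by
    rw [hN]
    simp only [hbracket, hJ]
    funext i
    fin_cases i <;>
      simp [Matrix.mulVec, dotProduct, Fin.sum_univ_four, Matrix.vecHead, Matrix.vecTail, Function.comp, Pi.smul_apply, smul_eq_mul] <;>
      (first | ring1 | linear_combination (-k) * key)
  refine ⟨hEq, ?_⟩
  rw [hEq]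
  intro h
  have h0 := congrFun h 0
  simp at h0
  have hpos : 1 + α1 ^ 2 > 0 := by positivity
  rcases h0 with h0 | h0
  · exact hk h0
  · nlinarith
end

section
/- For all integers a, b, c, every integer m ≥ 1, and every real number x, it is impossible that both a + b·x + (c/2)·x² = 0 and m² = 4π²·(b + c·x)² hold. (Equivalently, the determinant -π²·(a + bx + ½cx² + (i/2π)m + i(b + cx))·(a + bx + ½cx² + (i/2π)m - i(b + cx)) arising from the Fourier analysis of pseudoholomorphic pluricanonical sections on the nilmanifold 𝒩 never vanishes.) -/
/-!
Cartwright's integrals `I n θ = ∫_{-1}^{1} (1 - x²)ⁿ cos (x θ) dx` satisfy, by two integrations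
by parts, `I (n+2) θ · θ² = 2(n+2)((2n+3) I (n+1) θ - 2(n+1) I n θ)`. Hence
`J n = I n θ · θ^(2n+1) / n!` obeys `J (n+2) = 2(2n+3) J (n+1) - 4θ² J n`, and at `θ = π/2` it
starts with `J 0 = 2`, `J 1 = 4`. If `π² = p / q`, then `qⁿ J n` is an integer; but it equals
`(π/2) (qπ²/4)ⁿ / n! · I n (π/2)`, which is positive and tends to `0`. So `π²` is irrational.

Since `(b + c x)² = b² - 2ac + 2c (a + b x + c x²/2)`, the two equations give
`m² = 4π² (b² - 2ac)`, which would make `π²` rational as `m ≠ 0`.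
-/

open Real intervalIntegral Filter
open scoped Nat Topology

section IntegrationByParts

variable {u u' : ℝ → ℝ} {a b : ℝ}

theorem integral_mul_cos_mul_mul (hu : ∀ x, HasDerivAt u (u' x) x) (hu' : Continuous u') (θ : ℝ) :
    (∫ x in a..b, u x * cos (x * θ)) * θ =
      u b * sin (b * θ) - u a * sin (a * θ) - ∫ x in a..b, u' x * sin (x * θ) := by
  rw [← integral_mul_const]
  simp_rw [mul_assoc]
  exact integral_mul_deriv_eq_deriv_mul (fun x _ => hu x)
    (fun x _ => (hasDerivAt_mul_const θ).sin) (hu'.intervalIntegrable _ _)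
    (by apply Continuous.intervalIntegrable; fun_prop)

theorem integral_mul_sin_mul_mul (hu : ∀ x, HasDerivAt u (u' x) x) (hu' : Continuous u') (θ : ℝ) :
    (∫ x in a..b, u x * sin (x * θ)) * θ =
      u a * cos (a * θ) - u b * cos (b * θ) + ∫ x in a..b, u' x * cos (x * θ) := by
  rw [← integral_mul_const]
  have := integral_mul_deriv_eq_deriv_mul (a := a) (b := b) (v := fun x => -cos (x * θ))
    (fun x _ => hu x) (fun x _ => by simpa using (hasDerivAt_mul_const θ).cos.fun_neg)
    (hu'.intervalIntegrable _ _) (by apply Continuous.intervalIntegrable; fun_prop)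
  simp only [mul_neg, integral_neg] at this
  simp_rw [mul_assoc]
  linarith

end IntegrationByParts

theorem exists_int_pow_mul_eq_of_recurrence {s : ℕ → ℝ} {c : ℕ → ℤ} {t : ℝ} {a b : ℤ}
    (ht : t * b = a) (h₀ : ∃ z : ℤ, s 0 = z) (h₁ : ∃ z : ℤ, s 1 = z)
    (hrec : ∀ n, s (n + 2) = c n * s (n + 1) + t * s n) (n : ℕ) :
    ∃ z : ℤ, (b : ℝ) ^ n * s n = z := by
  induction n using Nat.twoStepInduction with
  | zero => simpa using h₀
  | one =>
    obtain ⟨z, hz⟩ := h₁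
    exact ⟨b * z, by push_cast; rw [pow_one, hz]⟩
  | more n ih₀ ih₁ =>
    obtain ⟨z₀, hz₀⟩ := ih₀
    obtain ⟨z₁, hz₁⟩ := ih₁
    refine ⟨c n * b * z₁ + a * b * z₀, ?_⟩
    push_cast
    rw [hrec, ← ht]
    linear_combination (c n * b : ℝ) * hz₁ + t * b ^ 2 * hz₀

namespace Cartwright

noncomputable def cosIntegral (n : ℕ) (θ : ℝ) : ℝ :=
  ∫ x in (-1)..1, (1 - x ^ 2) ^ n * cos (x * θ)

noncomputable def sinIntegral (n : ℕ) (θ : ℝ) : ℝ :=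
  ∫ x in (-1)..1, x * (1 - x ^ 2) ^ n * sin (x * θ)

variable {n : ℕ} {θ : ℝ}

theorem hasDerivAt_one_sub_sq_pow (n : ℕ) (x : ℝ) :
    HasDerivAt (fun x : ℝ => (1 - x ^ 2) ^ (n + 1)) (-(2 * (n + 1) * x * (1 - x ^ 2) ^ n)) x :=
  (((hasDerivAt_pow 2 x).const_sub 1).fun_pow (n + 1)).congr_deriv (by push_cast; ring)

theorem cosIntegral_zero_mul : cosIntegral 0 θ * θ = 2 * sin θ := by
  have := integral_mul_cos_mul_mul (a := -1) (b := 1) (fun x => hasDerivAt_const x (1 : ℝ))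
    continuous_const θ
  simp only [one_mul, zero_mul, integral_zero, sub_zero, neg_mul, sin_neg] at this
  simpa [cosIntegral, two_mul] using this

theorem cosIntegral_succ_mul : cosIntegral (n + 1) θ * θ = 2 * (n + 1) * sinIntegral n θ := by
  have := integral_mul_cos_mul_mul (a := -1) (b := 1) (hasDerivAt_one_sub_sq_pow n)
    (by fun_prop) θ
  simp only [one_pow, sub_self, zero_pow n.succ_ne_zero, zero_mul, neg_one_sq] at this
  rw [cosIntegral, this, sinIntegral, zero_sub, ← integral_const_mul, ← integral_neg]
  congr 1 with x
  ring

theorem sinIntegral_zero_mul : sinIntegral 0 θ * θ = cosIntegral 0 θ - 2 * cos θ := by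
  have := integral_mul_sin_mul_mul (a := -1) (b := 1) hasDerivAt_id' continuous_const θ
  simp only [neg_mul, one_mul, cos_neg] at this
  simp only [sinIntegral, cosIntegral, pow_zero, mul_one, one_mul]
  linarith

theorem sinIntegral_succ_mul :
    sinIntegral (n + 1) θ * θ =
      (2 * n + 3) * cosIntegral (n + 1) θ - 2 * (n + 1) * cosIntegral n θ := by
  have hu (x : ℝ) : HasDerivAt (fun x : ℝ => x * (1 - x ^ 2) ^ (n + 1))
      ((2 * n + 3) * (1 - x ^ 2) ^ (n + 1) - 2 * (n + 1) * (1 - x ^ 2) ^ n) x :=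
    ((hasDerivAt_id' x).mul (hasDerivAt_one_sub_sq_pow n x)).congr_deriv (by ring)
  have := integral_mul_sin_mul_mul (a := -1) (b := 1) hu (by fun_prop) θ
  simp only [one_pow, neg_one_sq, sub_self, zero_pow n.succ_ne_zero, mul_zero, zero_mul,
    zero_add] at this
  rw [sinIntegral, this]
  simp only [sub_mul, mul_assoc]
  rw [integral_sub, integral_const_mul, integral_const_mul, integral_const_mul, cosIntegral,
    cosIntegral]
  all_goals apply Continuous.intervalIntegrable; fun_prop

theorem cosIntegral_add_two_mul_sq :
    cosIntegral (n + 2) θ * θ ^ 2 =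
      2 * (n + 2) * ((2 * n + 3) * cosIntegral (n + 1) θ - 2 * (n + 1) * cosIntegral n θ) := by
  have h₁ := cosIntegral_succ_mul (n := n + 1) (θ := θ)
  push_cast at h₁
  linear_combination θ * h₁ + 2 * (n + 2) * sinIntegral_succ_mul (n := n) (θ := θ)

theorem cosIntegral_one_mul_pow_three : cosIntegral 1 θ * θ ^ 3 = 4 * sin θ - 4 * θ * cos θ := by
  have h₁ := cosIntegral_succ_mul (n := 0) (θ := θ)
  push_cast at h₁
  linear_combination
    θ ^ 2 * h₁ + 2 * θ * sinIntegral_zero_mul (θ := θ) + 2 * cosIntegral_zero_mul (θ := θ)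

noncomputable def scaledCosIntegral (n : ℕ) (θ : ℝ) : ℝ :=
  cosIntegral n θ * θ ^ (2 * n + 1) / n !

theorem scaledCosIntegral_zero : scaledCosIntegral 0 θ = 2 * sin θ := by
  simp [scaledCosIntegral, cosIntegral_zero_mul]

theorem scaledCosIntegral_one : scaledCosIntegral 1 θ = 4 * sin θ - 4 * θ * cos θ := by
  simp [scaledCosIntegral, cosIntegral_one_mul_pow_three]

theorem scaledCosIntegral_add_two :
    scaledCosIntegral (n + 2) θ =
      2 * (2 * n + 3) * scaledCosIntegral (n + 1) θ - 4 * θ ^ 2 * scaledCosIntegral n θ := by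
  simp only [scaledCosIntegral, Nat.factorial_succ]
  push_cast
  field_simp
  linear_combination θ ^ (2 * n + 3) * cosIntegral_add_two_mul_sq (n := n) (θ := θ)

theorem abs_cosIntegral_le (n : ℕ) (θ : ℝ) : |cosIntegral n θ| ≤ 2 := by
  have := norm_integral_le_of_norm_le_const (a := -1) (b := 1) (C := 1)
    (f := fun x => (1 - x ^ 2) ^ n * cos (x * θ)) fun x hx => by
      rw [Set.uIoc_of_le (by norm_num)] at hx
      rw [norm_mul, norm_pow]
      have : ‖1 - x ^ 2‖ ≤ 1 := by
        rw [Real.norm_eq_abs, abs_le]; constructor <;> nlinarith [hx.1, hx.2]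
      exact mul_le_one₀ (pow_le_one₀ (norm_nonneg _) this) (norm_nonneg _) (abs_cos_le_one _)
  norm_num at this
  exact this

theorem cosIntegral_pos (hθ : |θ| ≤ π / 2) : 0 < cosIntegral n θ := by
  refine integral_pos (by norm_num) (by fun_prop) (fun x hx => ?_) ⟨0, by simp⟩
  have hx' : |x| ≤ 1 := abs_le.2 ⟨hx.1.le, hx.2⟩
  refine mul_nonneg (pow_nonneg (by nlinarith [abs_mul_abs_self x, abs_nonneg x]) _) ?_
  apply cos_nonneg_of_neg_pi_div_two_le_of_le <;>
  · have := abs_le.1 (abs_mul x θ ▸ (mul_le_of_le_one_left (abs_nonneg θ) hx').trans hθ)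
    linarith

theorem tendsto_pow_div_factorial_mul_cosIntegral (C θ : ℝ) :
    Tendsto (fun n => C ^ n / n ! * cosIntegral n θ) atTop (𝓝 0) :=
  (FloorSemiring.tendsto_pow_div_factorial_atTop C).zero_mul_isBoundedUnder_le
    (isBoundedUnder_of ⟨2, fun n => abs_cosIntegral_le n θ⟩)

end Cartwright

open Cartwright in
theorem irrational_pi_sq : Irrational (π ^ 2) := by
  rintro ⟨q, hq⟩
  set s : ℕ → ℝ := fun n => scaledCosIntegral n (π / 2)
  set C : ℝ := q.den * π ^ 2 / 4
  have hs_int : ∀ n, ∃ z : ℤ, ((q.den : ℤ) : ℝ) ^ n * s n = z := by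
    refine exists_int_pow_mul_eq_of_recurrence (c := fun n => 2 * (2 * n + 3)) (t := -π ^ 2)
      (a := -q.num) ?_ ⟨2, by simp [s, scaledCosIntegral_zero]⟩
      ⟨4, by simp [s, scaledCosIntegral_one]⟩ fun n => ?_
    · have := congrArg (Rat.cast : ℚ → ℝ) q.mul_den_eq_num
      push_cast at this
      rw [← hq]
      push_cast
      linarith
    · simp only [s, scaledCosIntegral_add_two]
      push_cast
      ring
  have hs_eq (n : ℕ) :
      ((q.den : ℤ) : ℝ) ^ n * s n = π / 2 * (C ^ n / n !) * cosIntegral n (π / 2) := by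
    simp only [s, C, scaledCosIntegral, pow_succ, pow_mul]
    push_cast
    ring
  have hs_pos (n : ℕ) : 0 < π / 2 * (C ^ n / n !) * cosIntegral n (π / 2) := by
    have : 0 < C := by positivity
    have := cosIntegral_pos (n := n) (θ := π / 2) (by rw [abs_of_pos (by positivity)])
    positivity
  have hs_lim : Tendsto (fun n => π / 2 * (C ^ n / n !) * cosIntegral n (π / 2)) atTop (𝓝 0) := by
    simpa only [mul_assoc, mul_zero] using
      (tendsto_pow_div_factorial_mul_cosIntegral C (π / 2)).const_mul (π / 2)
  obtain ⟨n, hn⟩ := (hs_lim.eventually_lt_const one_pos).exists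
  obtain ⟨z, hz⟩ := hs_int n
  rw [hs_eq] at hz
  have h₀ : (0 : ℝ) < z := hz ▸ hs_pos n
  have h₁ : (z : ℝ) < 1 := hz ▸ hn
  norm_cast at h₀ h₁
  omega

theorem stmt_5 (a b c m : ℤ) (hm : 1 ≤ m) (x : ℝ) :
    ¬(((a : ℝ) + (b : ℝ) * x + (c : ℝ) / 2 * x ^ 2 = 0) ∧
      ((m : ℝ) ^ 2 = 4 * π ^ 2 * ((b : ℝ) + (c : ℝ) * x) ^ 2)) := by
  rintro ⟨h₁, h₂⟩
  have hD : ((m ^ 2 : ℤ) : ℝ) = π ^ 2 * ((4 * (b ^ 2 - 2 * a * c) : ℤ) : ℝ) := by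
    push_cast
    linear_combination h₂ + 8 * π ^ 2 * c * h₁
  have hD₀ : 4 * (b ^ 2 - 2 * a * c) ≠ 0 := by
    rintro hD₀
    rw [hD₀, Int.cast_zero, mul_zero, Int.cast_eq_zero] at hD
    nlinarith
  exact (irrational_iff_ne_rational _).1 irrational_pi_sq _ _ hD₀
    (by rw [hD, mul_div_cancel_right₀ _ (by exact_mod_cast hD₀)])
end

section
/- For all integers λ, μ and every integer m ≥ 1, the complex number (m²/4) - π²·(λ² + μ²) - i·π·m·μ is nonzero. Consequently, any doubly periodic smooth solution of the second-order elliptic equation u_xx + u_yy - m·u_y + (m²/4)·u = 0 on ℝ² whose Fourier coefficients u_{λμ} all satisfy ((m²/4) - π²λ² - π²μ² - iπmμ)·u_{λμ} = 0 must have all Fourier coefficients zero. -/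
open Real Complex

lemma stmt_7_aux (lam mu m : ℤ) (hm : 1 ≤ m) :
    (m : ℂ) ^ 2 / 4 - (π : ℂ) ^ 2 * ((lam : ℂ) ^ 2 + (mu : ℂ) ^ 2)
        - Complex.I * (π : ℂ) * (m : ℂ) * (mu : ℂ) ≠ 0 := by
  intro h
  have hm0 : (m : ℝ) ≠ 0 := by positivity
  have h' : (((m : ℝ) ^ 2 / 4 - π ^ 2 * ((lam : ℝ) ^ 2 + (mu : ℝ) ^ 2) : ℝ) : ℂ)
      + ((-(π * (m : ℝ) * (mu : ℝ)) : ℝ) : ℂ) * Complex.I = 0 := by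
    push_cast
    linear_combination h
  have him : π * (m : ℝ) * (mu : ℝ) = 0 := by
    have := congrArg Complex.im h'
    simp only [Complex.add_im, Complex.mul_im, Complex.ofReal_im, Complex.ofReal_re,
      Complex.I_im, Complex.I_re, Complex.zero_im, mul_zero, mul_one, zero_add,
      add_zero, neg_eq_zero] at this
    linarith [this]
  have hre : (m : ℝ) ^ 2 / 4 - π ^ 2 * ((lam : ℝ) ^ 2 + (mu : ℝ) ^ 2) = 0 := by
    have := congrArg Complex.re h'
    simp only [Complex.add_re, Complex.mul_re, Complex.ofReal_im, Complex.ofReal_re,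
      Complex.I_im, Complex.I_re, Complex.zero_re, mul_zero, mul_one, zero_mul,
      add_zero, zero_sub, sub_zero, zero_add] at this
    linarith [this]
  have hmu : (mu : ℝ) = 0 := by
    rcases mul_eq_zero.mp him with h1 | h1
    · rcases mul_eq_zero.mp h1 with h2 | h2
      · exact absurd h2 Real.pi_ne_zero
      · exact absurd h2 hm0
    · exact h1
  rw [hmu] at hre
  rcases eq_or_ne (lam : ℝ) 0 with hl | hl
  · rw [hl] at hre
    norm_num at hre
    exact hm0 (by nlinarith)
  · -- π ^ 2 * lam ^ 2 = m ^ 2 / 4, so (2 * |lam| * π) ^ 2 = m ^ 2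
    have key : (2 * |(lam : ℝ)| * π) ^ 2 = ((m : ℝ)) ^ 2 := by
      rw [mul_pow, mul_pow, _root_.sq_abs]
      nlinarith
    have hpos1 : (0:ℝ) < 2 * |(lam : ℝ)| * π := by
      have := Real.pi_pos
      have : (0:ℝ) < |(lam : ℝ)| := abs_pos.mpr hl
      positivity
    have hpos2 : (0:ℝ) < (m : ℝ) := by exact_mod_cast (by linarith : (1:ℤ) ≤ m)
    have heq : 2 * |(lam : ℝ)| * π = (m : ℝ) := by
      nlinarith
    have : π = (m : ℝ) / (2 * |(lam : ℝ)|) := by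
      field_simp at heq ⊢
      linarith
    have hπirr : Irrational π := irrational_pi
    apply hπirr
    rw [this]
    have : |(lam : ℝ)| = ((|lam| : ℤ) : ℝ) := by push_cast; simp
    rw [this]
    exact ⟨(m : ℚ) / (2 * (|lam| : ℤ)), by push_cast; ring⟩

theorem stmt_7 :
    (∀ lam mu m : ℤ, 1 ≤ m →
      (m : ℂ) ^ 2 / 4 - (π : ℂ) ^ 2 * ((lam : ℂ) ^ 2 + (mu : ℂ) ^ 2)
          - Complex.I * (π : ℂ) * (m : ℂ) * (mu : ℂ) ≠ 0) ∧
    (∀ m : ℤ, 1 ≤ m → ∀ u : ℤ → ℤ → ℂ,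
      (∀ lam mu : ℤ,
        ((m : ℂ) ^ 2 / 4 - (π : ℂ) ^ 2 * ((lam : ℂ) ^ 2 + (mu : ℂ) ^ 2)
          - Complex.I * (π : ℂ) * (m : ℂ) * (mu : ℂ)) * u lam mu = 0) →
      ∀ lam mu : ℤ, u lam mu = 0) := by
  constructor
  · exact stmt_7_aux
  · intro m hm u hu lam mu
    have := hu lam mu
    rcases mul_eq_zero.mp this with h | h
    · exact absurd h (stmt_7_aux lam mu m hm)
    · exact h
end
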